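/- arXiv:2104.06959 — 2 statements merged into one kernel-verified Lean document; each statement's English description precedes it below -/
import Mathlib

section
/- For each n ≥ 3, the prism graph Π_n = C_n □ K₂ (the Cartesian product of the n-cycle with an edge) has sum index exactly 5. -/
/-!
If `u` maximises and `w` minimises an injective labelling `f`, then the sums `f u + f x` over the
neighbours `x` of `u` are pairwise distinct, and so are the sums `f w + f y` over the neighbours of
`w`; a value common to both families is at least `f u + f w` and at most `f w + f u`. Hence a
`d`-regular graph has at least `2d - 1` edge sums, which is `5` for the prism.

Conversely, label the vertex `(i, j)` of the prism by `(-1)^(i+j) (i+1)`. Rungs then sum to `0`,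
consecutive vertices of either cycle to `±1`, and the wrap-around edges `(n-1, 0)` to
`±((-1)^(n+1) n + 1)`.
-/

open SimpleGraph

/-- The sum index of a finite simple graph. -/
noncomputable def sumIndex {V : Type*} [Fintype V] (G : SimpleGraph V) : ℕ :=
  sInf {n | ∃ f : V → ℤ, Function.Injective f ∧
    {s : ℤ | ∃ u v, G.Adj u v ∧ s = f u + f v}.ncard = n}

open Function Finset

theorem Fin.val_eq_val_add_one_of_val_sub_eq_one {n : ℕ} {a b : Fin n} (h : (a - b).val = 1) :
    a.val = b.val + 1 ∨ (a.val = 0 ∧ b.val + 1 = n) := by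
  rcases le_or_gt b a with hba | hab
  · rw [Fin.coe_sub_iff_le.2 hba] at h
    omega
  · rw [Fin.coe_sub_iff_lt.2 hab] at h
    omega

namespace SimpleGraph

variable {V α : Type*}

def edgeSums [Add α] (G : SimpleGraph V) (f : V → α) : Set α :=
  {s | ∃ u v, G.Adj u v ∧ s = f u + f v}

theorem edgeSums_finite [Add α] [Finite V] (G : SimpleGraph V) (f : V → α) :
    (G.edgeSums f).Finite :=
  (Set.finite_range fun p : V × V => f p.1 + f p.2).subset
    fun _ ⟨u, v, _, hs⟩ => ⟨(u, v), hs.symm⟩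

section LinearOrder

variable [AddCommMonoid α] [LinearOrder α] [IsOrderedCancelAddMonoid α] [Finite V]
  {G : SimpleGraph V} [G.LocallyFinite] {f : V → α}

theorem degree_add_degree_le_ncard_edgeSums_add_one (hf : Injective f) {u w : V}
    (hu : ∀ v, f v ≤ f u) (hw : ∀ v, f w ≤ f v) :
    G.degree u + G.degree w ≤ (G.edgeSums f).ncard + 1 := by
  classical
  let A := (G.neighborFinset u).image (f u + f ·)
  let B := (G.neighborFinset w).image (f w + f ·)
  have hA : #A = G.degree u := card_image_of_injective _ ((add_right_injective _).comp hf)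
  have hB : #B = G.degree w := card_image_of_injective _ ((add_right_injective _).comp hf)
  have hAB : A ∩ B ⊆ {f u + f w} := by
    intro s hs
    obtain ⟨⟨x, -, rfl⟩, y, -, hy⟩ := (mem_inter.1 hs).imp mem_image.1 mem_image.1
    rw [mem_singleton]
    apply le_antisymm
    · calc f u + f x = f w + f y := hy.symm
        _ ≤ f w + f u := by gcongr; exact hu y
        _ = f u + f w := add_comm _ _
    · gcongr; exact hw x
  have hsub : (↑(A ∪ B) : Set α) ⊆ G.edgeSums f := by
    intro s hs
    rcases mem_union.1 (mem_coe.1 hs) with hs | hs <;> obtain ⟨x, hx, rfl⟩ := mem_image.1 hs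
    exacts [⟨u, x, (G.mem_neighborFinset u x).1 hx, rfl⟩,
      ⟨w, x, (G.mem_neighborFinset w x).1 hx, rfl⟩]
  calc G.degree u + G.degree w = #(A ∪ B) + #(A ∩ B) := by
        rw [card_union_add_card_inter, hA, hB]
    _ ≤ (G.edgeSums f).ncard + 1 := by
      gcongr
      · rw [← Set.ncard_coe_finset]
        exact Set.ncard_le_ncard hsub (G.edgeSums_finite f)
      · exact (card_le_card hAB).trans (card_singleton _).le

theorem IsRegularOfDegree.two_mul_le_ncard_edgeSums_add_one [Nonempty V] {d : ℕ}
    (hG : G.IsRegularOfDegree d) (hf : Injective f) : 2 * d ≤ (G.edgeSums f).ncard + 1 := by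
  obtain ⟨u, hu⟩ := Finite.exists_max f
  obtain ⟨w, hw⟩ := Finite.exists_min f
  simpa [hG.degree_eq, two_mul] using degree_add_degree_le_ncard_edgeSums_add_one (G := G) hf hu hw

end LinearOrder

section SumIndex

variable [Fintype V] {G : SimpleGraph V}

theorem sumIndex_le_of_injective {f : V → ℤ} (hf : Injective f) {k : ℕ}
    (hk : (G.edgeSums f).ncard ≤ k) : sumIndex G ≤ k := by
  unfold sumIndex
  exact le_trans (Nat.sInf_le ⟨f, hf, rfl⟩) hk

theorem le_sumIndex {k : ℕ} (h : ∀ f : V → ℤ, Injective f → k ≤ (G.edgeSums f).ncard) :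
    k ≤ sumIndex G := by
  unfold sumIndex
  have hinj : Injective fun v => ((Fintype.equivFin V v : ℕ) : ℤ) :=
    Nat.cast_injective.comp (Fin.val_injective.comp (Fintype.equivFin V).injective)
  refine le_csInf ⟨_, _, hinj, rfl⟩ ?_
  rintro _ ⟨f, hf, rfl⟩
  exact h f hf

theorem IsRegularOfDegree.two_mul_le_sumIndex_add_one [Nonempty V] [G.LocallyFinite] {d : ℕ}
    (hG : G.IsRegularOfDegree d) : 2 * d ≤ sumIndex G + 1 := by
  have := le_sumIndex (G := G) (k := 2 * d - 1) fun f hf => by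
    have := hG.two_mul_le_ncard_edgeSums_add_one hf
    omega
  omega

end SumIndex

abbrev prismGraph (n : ℕ) : SimpleGraph (Fin n × Fin 2) := cycleGraph n □ ⊤

section Prism

variable {n : ℕ}

theorem isRegularOfDegree_prismGraph (hn : 3 ≤ n) : (prismGraph n).IsRegularOfDegree 3 := by
  obtain ⟨m, rfl⟩ : ∃ m, n = m + 3 := ⟨n - 3, by omega⟩
  intro p
  rw [degree_boxProd, cycleGraph_degree_three_le, IsRegularOfDegree.top.degree_eq, Fintype.card_fin]

def prismLabel (p : Fin n × Fin 2) : ℤ := (-1) ^ (p.1.val + p.2.val) * (p.1.val + 1)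

theorem abs_prismLabel (p : Fin n × Fin 2) : |prismLabel p| = p.1.val + 1 := by
  rw [prismLabel, abs_mul, abs_neg_one_pow, one_mul]
  exact abs_of_nonneg (by positivity)

theorem prismLabel_injective : Injective (prismLabel (n := n)) := by
  rintro ⟨i, j⟩ ⟨i', j'⟩ h
  have hi : i = i' := by
    have := congrArg abs h
    rw [abs_prismLabel, abs_prismLabel] at this
    exact Fin.ext (by exact_mod_cast add_right_cancel this)
  subst hi
  have hj : (-1 : ℤ) ^ (i.val + j.val) = (-1) ^ (i.val + j'.val) :=
    mul_right_cancel₀ (by positivity) h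
  fin_cases j <;> fin_cases j' <;> simp [pow_succ, self_eq_neg, neg_eq_self] at hj ⊢

theorem prismLabel_add_prismLabel_mem_of_val_sub_eq_one {a b : Fin n} (h : (a - b).val = 1)
    (j : Fin 2) : prismLabel (a, j) + prismLabel (b, j) ∈
      ({0, 1, -1, (-1 : ℤ) ^ (n + 1) * n + 1, -((-1 : ℤ) ^ (n + 1) * n + 1)} : Finset ℤ) := by
  rcases Fin.val_eq_val_add_one_of_val_sub_eq_one h with hab | ⟨ha, hb⟩
  · have hsum : prismLabel (a, j) + prismLabel (b, j) = -(-1) ^ (b.val + j.val) := by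
      simp only [prismLabel, hab]
      push_cast
      ring
    rcases neg_one_pow_eq_or ℤ (b.val + j.val) with hε | hε <;> simp [hsum, hε]
  · have hsum : prismLabel (a, j) + prismLabel (b, j) =
        (-1) ^ j.val * ((-1) ^ (n + 1) * n + 1) := by
      simp only [prismLabel, ha, ← hb]
      push_cast
      ring
    rcases neg_one_pow_eq_or ℤ j.val with hε | hε <;> simp [hsum, hε]

theorem edgeSums_prismGraph_prismLabel_subset :
    (prismGraph n).edgeSums prismLabel ⊆
      ↑({0, 1, -1, (-1 : ℤ) ^ (n + 1) * n + 1,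
        -((-1 : ℤ) ^ (n + 1) * n + 1)} : Finset ℤ) := by
  rintro s ⟨⟨a, j⟩, ⟨b, j'⟩, hadj, rfl⟩
  rcases boxProd_adj.1 hadj with ⟨hab, rfl⟩ | ⟨hjj', rfl⟩
  · rcases cycleGraph_adj'.1 hab with h | h
    · exact prismLabel_add_prismLabel_mem_of_val_sub_eq_one h j
    · rw [add_comm (prismLabel (a, j))]
      exact prismLabel_add_prismLabel_mem_of_val_sub_eq_one h j
  · fin_cases j <;> fin_cases j' <;> simp [prismLabel, pow_succ] at hjj' ⊢

theorem sumIndex_prismGraph_le : sumIndex (prismGraph n) ≤ 5 :=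
  sumIndex_le_of_injective prismLabel_injective <|
    (Set.ncard_le_ncard edgeSums_prismGraph_prismLabel_subset (Finset.finite_toSet _)).trans <|
      (Set.ncard_coe_finset _).trans_le card_le_five

end Prism

end SimpleGraph

/-- For `n ≥ 3`, the prism graph `Π_n = C_n □ K₂` has sum index exactly `5`. -/
theorem stmt8 (n : ℕ) (hn : 3 ≤ n) :
    sumIndex (SimpleGraph.cycleGraph n □ (⊤ : SimpleGraph (Fin 2))) = 5 := by
  have : NeZero n := ⟨by omega⟩
  have hlower := (isRegularOfDegree_prismGraph hn).two_mul_le_sumIndex_add_one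
  have hupper := sumIndex_prismGraph_le (n := n)
  change sumIndex (prismGraph n) = 5
  omega
end

section
/- Let K̂_n (n ≥ 4) be the complete graph K_n with one edge subdivided. Then D(K̂_n) = ⌈S(K̂_n)/2⌉ + 1, where S and D denote the sum index and difference index respectively. In particular, the conjecture that D(G) = ⌈S(G)/2⌉ for all nonempty graphs is false. -/
open SimpleGraph

/-- `K̂ n`: the complete graph on `Fin n` with the edge between vertices `0` and `1`
subdivided by the new vertex `Sum.inr ()`. -/
def hatK (n : ℕ) : SimpleGraph (Fin n ⊕ Unit) :=
  SimpleGraph.fromRel (fun a b =>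
    match a, b with
    | Sum.inl i, Sum.inl j => ¬(((i : ℕ) = 0 ∧ (j : ℕ) = 1) ∨ ((i : ℕ) = 1 ∧ (j : ℕ) = 0))
    | Sum.inl i, Sum.inr _ => (i : ℕ) = 0 ∨ (i : ℕ) = 1
    | Sum.inr _, Sum.inl j => (j : ℕ) = 0 ∨ (j : ℕ) = 1
    | Sum.inr _, Sum.inr _ => False)

/-- The difference index of a finite simple graph. -/
noncomputable def diffIndex {V : Type*} [Fintype V] (G : SimpleGraph V) : ℕ :=
  sInf {n | ∃ f : V → ℤ, Function.Injective f ∧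
    {s : ℤ | ∃ u v, G.Adj u v ∧ s = |f u - f v|}.ncard = n}

lemma hatK_adj_inl_inl {n : ℕ} {i j : Fin n} :
    (hatK n).Adj (Sum.inl i) (Sum.inl j) ↔
      i ≠ j ∧ ¬(((i:ℕ) = 0 ∧ (j:ℕ) = 1) ∨ ((i:ℕ) = 1 ∧ (j:ℕ) = 0)) := by
  rw [hatK, SimpleGraph.fromRel_adj]
  constructor
  · rintro ⟨h1, h2 | h2⟩
    · exact ⟨fun h => h1 (by rw [h]), h2⟩
    · refine ⟨fun h => h1 (by rw [h]), ?_⟩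
      revert h2; tauto
  · rintro ⟨h1, h2⟩
    exact ⟨by simpa using h1, Or.inl h2⟩

lemma hatK_adj_inl_inr {n : ℕ} {i : Fin n} {u : Unit} :
    (hatK n).Adj (Sum.inl i) (Sum.inr u) ↔ ((i:ℕ) = 0 ∨ (i:ℕ) = 1) := by
  rw [hatK, SimpleGraph.fromRel_adj]
  constructor
  · rintro ⟨h1, h2 | h2⟩ <;> exact h2
  · intro h
    exact ⟨by simp, Or.inl h⟩

lemma set_finite_diff {V : Type*} [Fintype V] (G : SimpleGraph V) (f : V → ℤ) :
    {s : ℤ | ∃ u v, G.Adj u v ∧ s = |f u - f v|}.Finite := by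
  apply Set.Finite.subset (Set.finite_range (fun p : V × V => |f p.1 - f p.2|))
  rintro s ⟨u, v, _, rfl⟩
  exact ⟨(u, v), rfl⟩

lemma set_finite_sum {V : Type*} [Fintype V] (G : SimpleGraph V) (f : V → ℤ) :
    {s : ℤ | ∃ u v, G.Adj u v ∧ s = f u + f v}.Finite := by
  apply Set.Finite.subset (Set.finite_range (fun p : V × V => f p.1 + f p.2))
  rintro s ⟨u, v, _, rfl⟩
  exact ⟨(u, v), rfl⟩

lemma finset_card_le_ncard {α : Type*} {S : Finset α} {T : Set α} (hT : T.Finite)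
    (h : ↑S ⊆ T) : S.card ≤ T.ncard := by
  have := Set.ncard_le_ncard h hT
  rwa [Set.ncard_coe_finset] at this

open Finset

lemma sum_pair_bound {n : ℕ} (f : Fin n ⊕ Unit → ℤ) (hf : Function.Injective f)
    (im iM : Fin n)
    (hmax : ∀ j, f (Sum.inl j) ≤ f (Sum.inl iM))
    (hmin : ∀ j, f (Sum.inl im) ≤ f (Sum.inl j))
    (P Q : Finset (Fin n))
    (hP : ∀ j ∈ P, j ≠ im ∧ j ≠ iM ∧ (hatK n).Adj (Sum.inl im) (Sum.inl j))
    (hQ : ∀ j ∈ Q, j ≠ iM ∧ (hatK n).Adj (Sum.inl iM) (Sum.inl j)) :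
    P.card + Q.card ≤ {s : ℤ | ∃ u v, (hatK n).Adj u v ∧ s = f u + f v}.ncard := by
  set g : Fin n → ℤ := fun j => f (Sum.inl j) with hg
  have hginj : Function.Injective g := fun a b h => Sum.inl_injective (hf h)
  set imP : Finset ℤ := P.image (fun j => g im + g j) with himP
  set imQ : Finset ℤ := Q.image (fun j => g iM + g j) with himQ
  have hcardP : imP.card = P.card := by
    apply Finset.card_image_of_injOn
    intro a _ b _ h
    simp only [] at h
    exact hginj (by omega)
  have hcardQ : imQ.card = Q.card := by
    apply Finset.card_image_of_injOn
    intro a _ b _ h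
    simp only [] at h
    exact hginj (by omega)
  have hdisj : Disjoint imP imQ := by
    rw [Finset.disjoint_left]
    rintro s hs ht
    obtain ⟨a, ha, rfl⟩ := Finset.mem_image.mp hs
    obtain ⟨b, hb, hba⟩ := Finset.mem_image.mp ht
    have h1 : g a < g iM := lt_of_le_of_ne (hmax a) (fun h => (hP a ha).2.1 (hginj h))
    have h2 : g im ≤ g b := hmin b
    omega
  have hsub : ↑(imP ∪ imQ) ⊆ {s : ℤ | ∃ u v, (hatK n).Adj u v ∧ s = f u + f v} := by
    intro s hs
    rcases Finset.mem_union.mp (by exact_mod_cast hs) with h | h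
    · obtain ⟨a, ha, rfl⟩ := Finset.mem_image.mp h
      exact ⟨Sum.inl im, Sum.inl a, (hP a ha).2.2, rfl⟩
    · obtain ⟨a, ha, rfl⟩ := Finset.mem_image.mp h
      exact ⟨Sum.inl iM, Sum.inl a, (hQ a ha).2, rfl⟩
  have := finset_card_le_ncard (set_finite_sum (hatK n) f) hsub
  rwa [Finset.card_union_of_disjoint hdisj, hcardP, hcardQ] at this

lemma val_ne_of_ne {n : ℕ} {a b : Fin n} (h : a ≠ b) : (a:ℕ) ≠ (b:ℕ) :=
  fun hv => h (Fin.ext hv)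

lemma sum_lower {n : ℕ} (hn : 4 ≤ n) (f : Fin n ⊕ Unit → ℤ)
    (hf : Function.Injective f) :
    2*n - 4 ≤ {s : ℤ | ∃ u v, (hatK n).Adj u v ∧ s = f u + f v}.ncard := by
  set g : Fin n → ℤ := fun j => f (Sum.inl j) with hg
  have hginj : Function.Injective g := fun a b h => Sum.inl_injective (hf h)
  obtain ⟨iM, -, hmax⟩ := Finset.exists_max_image Finset.univ g ⟨⟨0, by omega⟩, Finset.mem_univ _⟩
  obtain ⟨im, -, hmin⟩ := Finset.exists_min_image Finset.univ g ⟨⟨0, by omega⟩, Finset.mem_univ _⟩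
  have hmax' : ∀ j, g j ≤ g iM := fun j => hmax j (Finset.mem_univ j)
  have hmin' : ∀ j, g im ≤ g j := fun j => hmin j (Finset.mem_univ j)
  have hne : im ≠ iM := by
    intro h
    have h01 : g ⟨0, by omega⟩ ≠ g ⟨1, by omega⟩ := fun hh => by
      have := hginj hh; simp [Fin.ext_iff] at this
    have := hmax' ⟨0, by omega⟩
    have := hmax' ⟨1, by omega⟩
    have := hmin' ⟨0, by omega⟩
    have := hmin' ⟨1, by omega⟩
    rw [h] at *
    omega
  have hvne : (im:ℕ) ≠ (iM:ℕ) := val_ne_of_ne hne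
  -- membership facts
  have hcard2 : ((Finset.univ.erase im).erase iM).card = n - 2 := by
    rw [Finset.card_erase_of_mem (Finset.mem_erase.mpr ⟨hne.symm, Finset.mem_univ _⟩),
      Finset.card_erase_of_mem (Finset.mem_univ _), Finset.card_univ, Fintype.card_fin]
    omega
  have hcard1 : (Finset.univ.erase iM).card = n - 1 := by
    rw [Finset.card_erase_of_mem (Finset.mem_univ _), Finset.card_univ, Fintype.card_fin]
  have hcard1' : ((Finset.univ.erase iM).erase im).card = n - 2 := by
    rw [Finset.card_erase_of_mem (Finset.mem_erase.mpr ⟨hne, Finset.mem_univ _⟩), hcard1]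
    omega
  by_cases him : (im:ℕ) = 0 ∨ (im:ℕ) = 1
  · by_cases hiM : (iM:ℕ) = 0 ∨ (iM:ℕ) = 1
    · -- case (b): both special
      have hb := sum_pair_bound f hf im iM hmax' hmin'
        ((Finset.univ.erase im).erase iM) ((Finset.univ.erase iM).erase im)
        (fun j hj => by
          obtain ⟨hjM, hj'⟩ := Finset.mem_erase.mp hj
          obtain ⟨hjm, -⟩ := Finset.mem_erase.mp hj'
          refine ⟨hjm, hjM, hatK_adj_inl_inl.mpr ⟨Ne.symm hjm, ?_⟩⟩
          have h1 := val_ne_of_ne hjm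
          have h2 := val_ne_of_ne hjM
          omega)
        (fun j hj => by
          obtain ⟨hjm, hj'⟩ := Finset.mem_erase.mp hj
          obtain ⟨hjM, -⟩ := Finset.mem_erase.mp hj'
          refine ⟨hjM, hatK_adj_inl_inl.mpr ⟨Ne.symm hjM, ?_⟩⟩
          have h1 := val_ne_of_ne hjm
          have h2 := val_ne_of_ne hjM
          omega)
      rw [hcard2, hcard1'] at hb
      omega
    · -- case (c)/(d variant): im special, iM not
      push_neg at hiM
      set p : Fin n := if (im:ℕ) = 0 then ⟨1, by omega⟩ else ⟨0, by omega⟩ with hp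
      have hpval : (p:ℕ) = 1 ∨ (p:ℕ) = 0 := by
        rw [hp]; split <;> simp
      have hb := sum_pair_bound f hf im iM hmax' hmin'
        (((Finset.univ.erase im).erase iM).erase p) (Finset.univ.erase iM)
        (fun j hj => by
          obtain ⟨hjp, hj'⟩ := Finset.mem_erase.mp hj
          obtain ⟨hjM, hj''⟩ := Finset.mem_erase.mp hj'
          obtain ⟨hjm, -⟩ := Finset.mem_erase.mp hj''
          refine ⟨hjm, hjM, hatK_adj_inl_inl.mpr ⟨Ne.symm hjm, ?_⟩⟩
          have h1 := val_ne_of_ne hjp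
          have h2 := val_ne_of_ne hjm
          rw [hp] at h1
          rcases him with h | h <;> simp [h] at h1 <;> omega)
        (fun j hj => by
          obtain ⟨hjM, -⟩ := Finset.mem_erase.mp hj
          refine ⟨hjM, hatK_adj_inl_inl.mpr ⟨Ne.symm hjM, ?_⟩⟩
          have := val_ne_of_ne hjM
          omega)
      have hcp : n - 3 ≤ (((Finset.univ.erase im).erase iM).erase p).card := by
        have := Finset.pred_card_le_card_erase (s := (Finset.univ.erase im).erase iM) (a := p)
        omega
      rw [hcard1] at hb
      omega
  · push_neg at him
    by_cases hiM : (iM:ℕ) = 0 ∨ (iM:ℕ) = 1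
    · -- case (d): iM special, im not
      set q : Fin n := if (iM:ℕ) = 0 then ⟨1, by omega⟩ else ⟨0, by omega⟩ with hq
      have hb := sum_pair_bound f hf im iM hmax' hmin'
        ((Finset.univ.erase im).erase iM) ((Finset.univ.erase iM).erase q)
        (fun j hj => by
          obtain ⟨hjM, hj'⟩ := Finset.mem_erase.mp hj
          obtain ⟨hjm, -⟩ := Finset.mem_erase.mp hj'
          refine ⟨hjm, hjM, hatK_adj_inl_inl.mpr ⟨Ne.symm hjm, ?_⟩⟩
          omega)
        (fun j hj => by
          obtain ⟨hjq, hj'⟩ := Finset.mem_erase.mp hj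
          obtain ⟨hjM, -⟩ := Finset.mem_erase.mp hj'
          refine ⟨hjM, hatK_adj_inl_inl.mpr ⟨Ne.symm hjM, ?_⟩⟩
          have h1 := val_ne_of_ne hjq
          rw [hq] at h1
          rcases hiM with h | h <;> simp [h] at h1 <;> omega)
      have hcq : n - 2 ≤ ((Finset.univ.erase iM).erase q).card := by
        have := Finset.pred_card_le_card_erase (s := Finset.univ.erase iM) (a := q)
        omega
      rw [hcard2] at hb
      omega
    · -- case (a): neither special
      push_neg at hiM
      have hb := sum_pair_bound f hf im iM hmax' hmin'
        ((Finset.univ.erase im).erase iM) (Finset.univ.erase iM)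
        (fun j hj => by
          obtain ⟨hjM, hj'⟩ := Finset.mem_erase.mp hj
          obtain ⟨hjm, -⟩ := Finset.mem_erase.mp hj'
          exact ⟨hjm, hjM, hatK_adj_inl_inl.mpr ⟨Ne.symm hjm, by omega⟩⟩)
        (fun j hj => by
          obtain ⟨hjM, -⟩ := Finset.mem_erase.mp hj
          exact ⟨hjM, hatK_adj_inl_inl.mpr ⟨Ne.symm hjM, by omega⟩⟩)
      rw [hcard2, hcard1] at hb
      omega

lemma diff_lower {n : ℕ} (hn : 4 ≤ n) (f : Fin n ⊕ Unit → ℤ)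
    (hf : Function.Injective f) :
    n - 1 ≤ {s : ℤ | ∃ u v, (hatK n).Adj u v ∧ s = |f u - f v|}.ncard := by
  set T := {s : ℤ | ∃ u v, (hatK n).Adj u v ∧ s = |f u - f v|} with hT
  have hTfin : T.Finite := set_finite_diff (hatK n) f
  set g : Fin n → ℤ := fun j => f (Sum.inl j) with hg
  have hginj : Function.Injective g := fun a b h => Sum.inl_injective (hf h)
  obtain ⟨iM, -, hmax⟩ := Finset.exists_max_image Finset.univ g ⟨⟨0, by omega⟩, Finset.mem_univ _⟩
  obtain ⟨im, -, hmin⟩ := Finset.exists_min_image Finset.univ g ⟨⟨0, by omega⟩, Finset.mem_univ _⟩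
  have hmax' : ∀ j, g j ≤ g iM := fun j => hmax j (Finset.mem_univ j)
  have hmin' : ∀ j, g im ≤ g j := fun j => hmin j (Finset.mem_univ j)
  have hlt : g im < g iM := by
    have h01 : g ⟨0, by omega⟩ ≠ g ⟨1, by omega⟩ := fun hh => by
      have := hginj hh; simp [Fin.ext_iff] at this
    have := hmax' ⟨0, by omega⟩
    have := hmax' ⟨1, by omega⟩
    have := hmin' ⟨0, by omega⟩
    have := hmin' ⟨1, by omega⟩
    omega
  have hne : im ≠ iM := fun h => by rw [h] at hlt; omega
  have hvne : (im:ℕ) ≠ (iM:ℕ) := val_ne_of_ne hne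
  by_cases hiM : ¬((iM:ℕ) = 0 ∨ (iM:ℕ) = 1)
  · -- case A : max vertex not special
    push_neg at hiM
    set S : Finset ℤ := (Finset.univ.erase iM).image (fun j => g iM - g j) with hS
    have hcard : S.card = n - 1 := by
      rw [hS, Finset.card_image_of_injOn (fun a _ b _ h => hginj (by omega)),
        Finset.card_erase_of_mem (Finset.mem_univ _), Finset.card_univ, Fintype.card_fin]
    have hsub : ↑S ⊆ T := by
      intro s hs
      obtain ⟨j, hj, rfl⟩ := Finset.mem_image.mp (by exact_mod_cast hs)
      obtain ⟨hjM, -⟩ := Finset.mem_erase.mp hj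
      refine ⟨Sum.inl iM, Sum.inl j, hatK_adj_inl_inl.mpr ⟨Ne.symm hjM, by omega⟩, ?_⟩
      rw [abs_of_nonneg (by have := hmax' j; simp only [hg] at *; omega)]
    have := finset_card_le_ncard hTfin hsub
    omega
  · push_neg at hiM
    by_cases him : ¬((im:ℕ) = 0 ∨ (im:ℕ) = 1)
    · -- case B : min vertex not special
      push_neg at him
      set S : Finset ℤ := (Finset.univ.erase im).image (fun j => g j - g im) with hS
      have hcard : S.card = n - 1 := by
        rw [hS, Finset.card_image_of_injOn (fun a _ b _ h => hginj (by omega)),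
          Finset.card_erase_of_mem (Finset.mem_univ _), Finset.card_univ, Fintype.card_fin]
      have hsub : ↑S ⊆ T := by
        intro s hs
        obtain ⟨j, hj, rfl⟩ := Finset.mem_image.mp (by exact_mod_cast hs)
        obtain ⟨hjm, -⟩ := Finset.mem_erase.mp hj
        refine ⟨Sum.inl j, Sum.inl im, hatK_adj_inl_inl.mpr ⟨hjm, by omega⟩, ?_⟩
        rw [abs_of_nonneg (by have := hmin' j; simp only [hg] at *; omega)]
      have := finset_card_le_ncard hTfin hsub
      omega
    · -- case C : both max and min special
      push_neg at him
      set c : ℤ := f (Sum.inr ()) with hc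
      have hcg : ∀ j, c ≠ g j := by
        intro j h
        exact absurd (hf h) (by simp)
      set L : Finset ℤ := ((Finset.univ.erase iM).erase im).image (fun j => g iM - g j) with hL
      have hLcard : L.card = n - 2 := by
        rw [hL, Finset.card_image_of_injOn (fun a _ b _ h => hginj (by omega)),
          Finset.card_erase_of_mem (Finset.mem_erase.mpr ⟨hne, Finset.mem_univ _⟩),
          Finset.card_erase_of_mem (Finset.mem_univ _), Finset.card_univ, Fintype.card_fin]
        omega
      have hLsub : ↑L ⊆ T := by
        intro s hs
        obtain ⟨j, hj, rfl⟩ := Finset.mem_image.mp (by exact_mod_cast hs)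
        obtain ⟨hjm, hj'⟩ := Finset.mem_erase.mp hj
        obtain ⟨hjM, -⟩ := Finset.mem_erase.mp hj'
        have h1 := val_ne_of_ne hjm
        have h2 := val_ne_of_ne hjM
        refine ⟨Sum.inl iM, Sum.inl j, hatK_adj_inl_inl.mpr ⟨Ne.symm hjM, by omega⟩, ?_⟩
        rw [abs_of_nonneg (by have := hmax' j; simp only [hg] at *; omega)]
      rcases lt_or_gt_of_ne (hcg iM) with hcM | hcM
      · -- c below max : use |c - g iM| = g iM - c, new value
        set x : ℤ := g iM - c with hx
        have hxT : x ∈ T := by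
          refine ⟨Sum.inl iM, Sum.inr (), hatK_adj_inl_inr.mpr hiM, ?_⟩
          rw [abs_of_nonneg (by simp only [hg, hc] at *; omega)]
        have hxL : x ∉ L := by
          intro hmem
          obtain ⟨j, -, hj⟩ := Finset.mem_image.mp hmem
          exact hcg j (by omega)
        have hsub : ↑(insert x L) ⊆ T := by
          intro s hs
          rcases Finset.mem_insert.mp (by exact_mod_cast hs) with rfl | h
          · exact hxT
          · exact hLsub h
        have := finset_card_le_ncard hTfin hsub
        rw [Finset.card_insert_of_notMem hxL, hLcard] at this
        omega
      · -- c above max : use c - g im, bigger than everything in L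
        set x : ℤ := c - g im with hx
        have hxT : x ∈ T := by
          refine ⟨Sum.inr (), Sum.inl im, (hatK_adj_inl_inr.mpr him).symm, ?_⟩
          rw [abs_of_nonneg (by simp only [hg, hc] at *; omega)]
        have hxL : x ∉ L := by
          intro hmem
          obtain ⟨j, hj, hjx⟩ := Finset.mem_image.mp hmem
          have := hmin' j
          omega
        have hsub : ↑(insert x L) ⊆ T := by
          intro s hs
          rcases Finset.mem_insert.mp (by exact_mod_cast hs) with rfl | h
          · exact hxT
          · exact hLsub h
        have := finset_card_le_ncard hTfin hsub
        rw [Finset.card_insert_of_notMem hxL, hLcard] at this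
        omega

lemma hatK_not_adj_inr {n : ℕ} {u v : Unit} : ¬ (hatK n).Adj (Sum.inr u) (Sum.inr v) := by
  rw [hatK, SimpleGraph.fromRel_adj]
  rintro ⟨-, h | h⟩ <;> exact h

lemma diffIndex_hatK {n : ℕ} (hn : 4 ≤ n) : diffIndex (hatK n) = n - 1 := by
  rw [diffIndex]
  set f : Fin n ⊕ Unit → ℤ := Sum.elim (fun i => ((i:ℕ):ℤ)) (fun _ => -1) with hfdef
  have hinj : Function.Injective f := by
    rintro (i | u) (j | v) h <;> simp [hfdef] at h ⊢
    · exact Fin.ext (by omega)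
  have hsub : {s : ℤ | ∃ u v, (hatK n).Adj u v ∧ s = |f u - f v|}
      ⊆ ↑(Finset.Icc (1:ℤ) ((n:ℤ) - 1)) := by
    rintro s ⟨u, v, hadj, rfl⟩
    simp only [Finset.coe_Icc, Set.mem_Icc]
    match u, v with
    | Sum.inl i, Sum.inl j =>
      obtain ⟨hij, -⟩ := hatK_adj_inl_inl.mp hadj
      have h1 : (i:ℕ) < n := i.isLt
      have h2 : (j:ℕ) < n := j.isLt
      have h3 : (i:ℕ) ≠ (j:ℕ) := val_ne_of_ne hij
      rcases abs_cases ((f (Sum.inl i)) - f (Sum.inl j)) with ⟨h4, h5⟩ | ⟨h4, h5⟩ <;>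
        simp only [hfdef, Sum.elim_inl] at * <;> omega
    | Sum.inl i, Sum.inr v =>
      have h := hatK_adj_inl_inr.mp hadj
      rcases abs_cases ((f (Sum.inl i)) - f (Sum.inr v)) with ⟨h4, h5⟩ | ⟨h4, h5⟩ <;>
        simp only [hfdef, Sum.elim_inl, Sum.elim_inr] at * <;> omega
    | Sum.inr u, Sum.inl j =>
      have h := hatK_adj_inl_inr.mp hadj.symm
      rcases abs_cases ((f (Sum.inr u)) - f (Sum.inl j)) with ⟨h4, h5⟩ | ⟨h4, h5⟩ <;>
        simp only [hfdef, Sum.elim_inl, Sum.elim_inr] at * <;> omega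
    | Sum.inr u, Sum.inr v => exact absurd hadj hatK_not_adj_inr
  have hup : {s : ℤ | ∃ u v, (hatK n).Adj u v ∧ s = |f u - f v|}.ncard ≤ n - 1 := by
    have := Set.ncard_le_ncard hsub (Finset.Icc (1:ℤ) ((n:ℤ) - 1)).finite_toSet
    rw [Set.ncard_coe_finset, Int.card_Icc] at this
    omega
  have hmem : {s : ℤ | ∃ u v, (hatK n).Adj u v ∧ s = |f u - f v|}.ncard ∈
      {m | ∃ f : Fin n ⊕ Unit → ℤ, Function.Injective f ∧
        {s : ℤ | ∃ u v, (hatK n).Adj u v ∧ s = |f u - f v|}.ncard = m} := ⟨f, hinj, rfl⟩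
  refine le_antisymm (le_trans (Nat.sInf_le hmem) hup) ?_
  refine le_csInf ⟨_, hmem⟩ ?_
  rintro m ⟨f', hf', rfl⟩
  exact diff_lower hn f' hf'

lemma sumIndex_hatK {n : ℕ} (hn : 4 ≤ n) : sumIndex (hatK n) = 2*n - 4 := by
  rw [sumIndex]
  set f : Fin n ⊕ Unit → ℤ := Sum.elim (fun i => ((i:ℕ):ℤ)) (fun _ => (n:ℤ)) with hfdef
  have hinj : Function.Injective f := by
    rintro (i | u) (j | v) h <;> simp [hfdef] at h ⊢
    · exact Fin.ext (by omega)
    · have := i.isLt; omega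
    · have := j.isLt; omega
  have hsub : {s : ℤ | ∃ u v, (hatK n).Adj u v ∧ s = f u + f v}
      ⊆ ↑(Finset.Icc (2:ℤ) (2*(n:ℤ) - 3)) := by
    rintro s ⟨u, v, hadj, rfl⟩
    simp only [Finset.coe_Icc, Set.mem_Icc]
    match u, v with
    | Sum.inl i, Sum.inl j =>
      obtain ⟨hij, hbad⟩ := hatK_adj_inl_inl.mp hadj
      have h1 : (i:ℕ) < n := i.isLt
      have h2 : (j:ℕ) < n := j.isLt
      have h3 : (i:ℕ) ≠ (j:ℕ) := val_ne_of_ne hij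
      simp only [hfdef, Sum.elim_inl]
      push_neg at hbad
      omega
    | Sum.inl i, Sum.inr v =>
      have h := hatK_adj_inl_inr.mp hadj
      simp only [hfdef, Sum.elim_inl, Sum.elim_inr]
      omega
    | Sum.inr u, Sum.inl j =>
      have h := hatK_adj_inl_inr.mp hadj.symm
      simp only [hfdef, Sum.elim_inl, Sum.elim_inr]
      omega
    | Sum.inr u, Sum.inr v => exact absurd hadj hatK_not_adj_inr
  have hup : {s : ℤ | ∃ u v, (hatK n).Adj u v ∧ s = f u + f v}.ncard ≤ 2*n - 4 := by
    have := Set.ncard_le_ncard hsub (Finset.Icc (2:ℤ) (2*(n:ℤ) - 3)).finite_toSet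
    rw [Set.ncard_coe_finset, Int.card_Icc] at this
    omega
  have hmem : {s : ℤ | ∃ u v, (hatK n).Adj u v ∧ s = f u + f v}.ncard ∈
      {m | ∃ f : Fin n ⊕ Unit → ℤ, Function.Injective f ∧
        {s : ℤ | ∃ u v, (hatK n).Adj u v ∧ s = f u + f v}.ncard = m} := ⟨f, hinj, rfl⟩
  refine le_antisymm (le_trans (Nat.sInf_le hmem) hup) ?_
  refine le_csInf ⟨_, hmem⟩ ?_
  rintro m ⟨f', hf', rfl⟩
  exact sum_lower hn f' hf'

/-- For `n ≥ 4`, `D(K̂_n) = ⌈S(K̂_n)/2⌉ + 1` (ceiling division on `ℕ`).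
In particular the conjecture `D(G) = ⌈S(G)/2⌉` fails for `K̂_n`. -/
theorem stmt11 (n : ℕ) (hn : 4 ≤ n) :
    diffIndex (hatK n) = (sumIndex (hatK n) + 1) / 2 + 1 := by
  rw [diffIndex_hatK hn, sumIndex_hatK hn]
  omega
end
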